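/- arXiv:1509.07273 — 5 statements merged into one kernel-verified Lean document; each statement's English description precedes it below -/
import Mathlib

section
/- Let 𝔇 ⊂ ℝ be a ℚ-vector subspace with 𝔇 ≠ {0}, and let u : (0,1) ∩ 𝔇 → ℝ satisfy, for some f ∈ L¹_loc(0,1), the weighted convexity inequality u((1-t)r₀+tr₁) ≤ (1-t)u(r₀)+tu(r₁) - (r₁-r₀)² ∫₀¹ f((1-s)r₀+sr₁) g(s,t) ds for all r₀, r₁ ∈ (0,1) ∩ 𝔇 and t ∈ [0,1] such that (1-t)r₀+tr₁ ∈ 𝔇. Then u is locally Lipschitz: for every closed subinterval [a,b] ⊂ (0,1) there exists C ≥ 0 such that |u(x)-u(y)| ≤ C|x-y| for all x, y ∈ (a,b) ∩ 𝔇. -/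
/-!
Fix `p₁ < p₂ < a` and `b < q₁ < q₂` in the dense set `𝔇` and put `K = ∫_{p₁}^{q₂} |f|`.
For `p < x < y` in `[p₁, q₂] ∩ 𝔇`, the convexity inequality at `x = (1-t) p + t y`, together
with `|green s t| ≤ t (1-t)`, gives `slope u p x ≤ slope u x y + K`: slopes increase up to `K`.
Hence every slope over `(a, b) ∩ 𝔇` lies between `slope u p₁ p₂ - 2K` and `slope u q₁ q₂ + 2K`.
-/

open MeasureTheory Set

/-- The Green function of the interval `[0,1]`. -/
noncomputable def green (s t : ℝ) : ℝ := if s ≤ t then (1 - t) * s else t * (1 - s)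

theorem Submodule.dense_of_ne_bot {D : Submodule ℚ ℝ} (hD : D ≠ ⊥) : Dense (D : Set ℝ) := by
  obtain ⟨x, hxD, hx0⟩ := Submodule.exists_mem_ne_zero_of_ne_bot hD
  have habs : |x| ∈ D := by
    rcases abs_choice x with h | h <;> rw [h]
    exacts [hxD, D.neg_mem hxD]
  have hpos : 0 < |x| := abs_pos.mpr hx0
  refine dense_of_exists_between fun a b hab => ?_
  obtain ⟨q, hqa, hqb⟩ := exists_rat_btwn (div_lt_div_of_pos_right hab hpos)
  refine ⟨(q : ℝ) * |x|, by simpa [Rat.smul_def] using D.smul_mem q habs, ?_, ?_⟩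
  · exact (div_lt_iff₀ hpos).mp hqa
  · exact (lt_div_iff₀ hpos).mp hqb

lemma abs_green_le {s t : ℝ} (hs : s ∈ Icc (0:ℝ) 1) (ht : t ∈ Icc (0:ℝ) 1) :
    |green s t| ≤ t * (1 - t) := by
  obtain ⟨hs0, hs1⟩ := hs
  obtain ⟨ht0, ht1⟩ := ht
  unfold green
  split_ifs with h
  · rw [abs_of_nonneg (by nlinarith)]; nlinarith
  · rw [abs_of_nonneg (by nlinarith)]; nlinarith

lemma setIntegral_Ioo_zero_one_comp_affine (g : ℝ → ℝ) {r₀ r₁ : ℝ} (h : r₀ < r₁) :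
    ∫ s in Ioo (0:ℝ) 1, g ((1 - s) * r₀ + s * r₁) = (r₁ - r₀)⁻¹ * ∫ y in r₀..r₁, g y := by
  have hrw : ∀ s : ℝ, (1 - s) * r₀ + s * r₁ = (r₁ - r₀) * s + r₀ := fun s => by ring
  simp_rw [hrw]
  rw [← integral_Ioc_eq_integral_Ioo, ← intervalIntegral.integral_of_le zero_le_one,
    intervalIntegral.integral_comp_mul_add _ (sub_ne_zero.mpr h.ne'), smul_eq_mul]
  simp

lemma abs_setIntegral_mul_green_le {f : ℝ → ℝ} {r₀ r₁ t : ℝ} (hr : r₀ < r₁)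
    (hf : IntervalIntegrable f volume r₀ r₁) (ht : t ∈ Icc (0:ℝ) 1) :
    |∫ s in Ioo (0:ℝ) 1, f ((1 - s) * r₀ + s * r₁) * green s t| ≤
      t * (1 - t) / (r₁ - r₀) * ∫ y in r₀..r₁, |f y| := by
  have hint : IntegrableOn (fun s => |f ((1 - s) * r₀ + s * r₁)|) (Ioo 0 1) := by
    have h := (hf.abs.comp_add_right r₀).comp_mul_left (c := r₁ - r₀)
    rw [sub_self, zero_div, div_self (sub_ne_zero.mpr hr.ne')] at h
    refine (h.1.mono_set Ioo_subset_Ioc_self).congr_fun (fun s _ => ?_) measurableSet_Ioo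
    ring_nf
  calc |∫ s in Ioo (0:ℝ) 1, f ((1 - s) * r₀ + s * r₁) * green s t|
      ≤ ∫ s in Ioo (0:ℝ) 1, |f ((1 - s) * r₀ + s * r₁)| * (t * (1 - t)) := by
        refine (Real.norm_eq_abs _).ge.trans (norm_integral_le_of_norm_le (hint.mul_const _) ?_)
        rw [ae_restrict_iff' measurableSet_Ioo]
        refine Filter.Eventually.of_forall fun s hs => ?_
        rw [Real.norm_eq_abs, abs_mul]
        exact mul_le_mul_of_nonneg_left (abs_green_le (Ioo_subset_Icc_self hs) ht) (abs_nonneg _)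
    _ = t * (1 - t) / (r₁ - r₀) * ∫ y in r₀..r₁, |f y| := by
        rw [integral_mul_const, setIntegral_Ioo_zero_one_comp_affine (fun y => |f y|) hr]
        ring

/-- `u'' ≥ f` tested along segments with endpoints in `S`: for smooth `u` with `u'' = f` the
inequality is an equality. -/
def GreenConvexOn (S : Set ℝ) (u f : ℝ → ℝ) : Prop :=
  ∀ r₀ ∈ S, ∀ r₁ ∈ S, r₀ ≤ r₁ → ∀ t ∈ Icc (0:ℝ) 1, (1 - t) * r₀ + t * r₁ ∈ S →
    u ((1 - t) * r₀ + t * r₁) ≤ (1 - t) * u r₀ + t * u r₁ -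
      (r₁ - r₀) ^ 2 * ∫ s in Ioo (0:ℝ) 1, f ((1 - s) * r₀ + s * r₁) * green s t

theorem GreenConvexOn.slope_le_slope_add_integral_abs {S : Set ℝ} {u f : ℝ → ℝ}
    (h : GreenConvexOn S u f) {p x y : ℝ} (hp : p ∈ S) (hx : x ∈ S) (hy : y ∈ S)
    (hpx : p < x) (hxy : x < y) (hf : IntervalIntegrable f volume p y) :
    slope u p x ≤ slope u x y + ∫ z in p..y, |f z| := by
  have hpy : 0 < y - p := by linarith
  set t := (x - p) / (y - p) with ht_def
  have ht : t ∈ Icc (0:ℝ) 1 :=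
    ⟨div_nonneg (by linarith) hpy.le, (div_le_one hpy).mpr (by linarith)⟩
  have hxt : (1 - t) * p + t * y = x := by rw [ht_def]; field_simp; ring
  have hconv := h p hp y hy (by linarith) t ht (hxt ▸ hx)
  have hI := abs_setIntegral_mul_green_le (by linarith) hf ht
  rw [hxt] at hconv
  set I := ∫ s in Ioo (0:ℝ) 1, f ((1 - s) * p + s * y) * green s t
  set J := ∫ z in p..y, |f z|
  have hbound : u x ≤ (1 - t) * u p + t * u y + (y - p) ^ 2 * (t * (1 - t) / (y - p) * J) := by
    have := mul_le_mul_of_nonneg_left ((neg_le_abs I).trans hI) (sq_nonneg (y - p))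
    linarith
  have hcleared : (y - p) * u x ≤ (y - x) * u p + (x - p) * u y + (x - p) * (y - x) * J := by
    refine (mul_le_mul_of_nonneg_left hbound hpy.le).trans_eq ?_
    rw [ht_def]; field_simp; ring
  rw [slope_def_field, slope_def_field, div_add' _ _ _ (by linarith : y - x ≠ 0),
    div_le_div_iff₀ (by linarith) (by linarith)]
  linarith

theorem GreenConvexOn.slope_le_slope_add_of_subset_Icc {S : Set ℝ} {u f : ℝ → ℝ} {c d : ℝ}
    (h : GreenConvexOn S u f) (hS : S ⊆ Icc c d) (hf : IntervalIntegrable f volume c d) :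
    ∀ p ∈ S, ∀ x ∈ S, ∀ y ∈ S, p < x → x < y →
      slope u p x ≤ slope u x y + ∫ z in c..d, |f z| := by
  intro p hp x hx y hy hpx hxy
  obtain ⟨hcp, hpd⟩ := hS hp
  obtain ⟨hcy, hyd⟩ := hS hy
  have hpy : p ≤ y := (hpx.trans hxy).le
  refine (h.slope_le_slope_add_integral_abs hp hx hy hpx hxy (hf.mono_set ?_)).trans ?_
  · exact uIcc_subset_uIcc (mem_uIcc_of_le hcp hpd) (mem_uIcc_of_le hcy hyd)
  · exact add_le_add_right (intervalIntegral.integral_mono_interval hcp hpy hyd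
      (Filter.Eventually.of_forall fun _ => abs_nonneg _) hf.abs) _

theorem abs_slope_le_of_slope_le_slope_add {S : Set ℝ} {u : ℝ → ℝ} {K : ℝ}
    (h : ∀ p ∈ S, ∀ x ∈ S, ∀ y ∈ S, p < x → x < y → slope u p x ≤ slope u x y + K)
    {p₁ p₂ x y q₁ q₂ : ℝ} (hp₁ : p₁ ∈ S) (hp₂ : p₂ ∈ S) (hx : x ∈ S) (hy : y ∈ S)
    (hq₁ : q₁ ∈ S) (hq₂ : q₂ ∈ S) (hp : p₁ < p₂) (hp₂x : p₂ < x) (hxy : x < y) (hyq₁ : y < q₁)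
    (hq : q₁ < q₂) :
    |slope u x y| ≤ |slope u p₁ p₂| + |slope u q₁ q₂| + 2 * K := by
  have h₁ := h p₁ hp₁ p₂ hp₂ x hx hp hp₂x
  have h₂ := h p₂ hp₂ x hx y hy hp₂x hxy
  have h₃ := h x hx y hy q₁ hq₁ hxy hyq₁
  have h₄ := h y hy q₁ hq₁ q₂ hq₂ hyq₁ hq
  exact abs_le.mpr
    ⟨by linarith [neg_abs_le (slope u p₁ p₂), abs_nonneg (slope u q₁ q₂)],
      by linarith [le_abs_self (slope u q₁ q₂), abs_nonneg (slope u p₁ p₂)]⟩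

theorem abs_sub_le_mul_abs_sub_of_abs_slope_le {T : Set ℝ} {u : ℝ → ℝ} {C : ℝ}
    (h : ∀ x ∈ T, ∀ y ∈ T, x < y → |slope u x y| ≤ C) :
    ∀ x ∈ T, ∀ y ∈ T, |u x - u y| ≤ C * |x - y| := by
  suffices ∀ x ∈ T, ∀ y ∈ T, x < y → |u x - u y| ≤ C * |x - y| by
    intro x hx y hy
    rcases lt_trichotomy x y with hxy | rfl | hxy
    · exact this x hx y hy hxy
    · simp
    · rw [abs_sub_comm (u x), abs_sub_comm x]
      exact this y hy x hx hxy
  intro x hx y hy hxy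
  have hyx : 0 < |y - x| := abs_pos.mpr (sub_ne_zero.mpr hxy.ne')
  have := h x hx y hy hxy
  rw [slope_def_field, abs_div, div_le_iff₀ hyx] at this
  rwa [abs_sub_comm (u x), abs_sub_comm x]

/-- Let `𝔇 ⊂ ℝ` be a nontrivial `ℚ`-vector subspace, and let `u` satisfy, for
some `f ∈ L¹_loc(0,1)`, the weighted convexity inequality on `(0,1) ∩ 𝔇`.
Then `u` is locally Lipschitz on `(0,1) ∩ 𝔇`. -/
theorem stmt3 (D : Submodule ℚ ℝ) (hD : D ≠ ⊥) (u f : ℝ → ℝ)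
    (hf : LocallyIntegrableOn f (Ioo 0 1))
    (hconv : ∀ r₀ ∈ Ioo (0:ℝ) 1 ∩ (D : Set ℝ), ∀ r₁ ∈ Ioo (0:ℝ) 1 ∩ (D : Set ℝ),
      r₀ ≤ r₁ → ∀ t ∈ Icc (0:ℝ) 1, (1 - t) * r₀ + t * r₁ ∈ (D : Set ℝ) →
        u ((1 - t) * r₀ + t * r₁) ≤ (1 - t) * u r₀ + t * u r₁ -
          (r₁ - r₀) ^ 2 * ∫ s in Ioo (0:ℝ) 1, f ((1 - s) * r₀ + s * r₁) * green s t) :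
    ∀ a b : ℝ, 0 < a → a ≤ b → b < 1 →
      ∃ C : ℝ, 0 ≤ C ∧ ∀ x ∈ Ioo a b ∩ (D : Set ℝ), ∀ y ∈ Ioo a b ∩ (D : Set ℝ),
        |u x - u y| ≤ C * |x - y| := by
  intro a b ha hab hb
  have hdense := Submodule.dense_of_ne_bot hD
  obtain ⟨p₁, hp₁D, hp₁0, hp₁a⟩ := hdense.exists_between ha
  obtain ⟨p₂, hp₂D, hp₁p₂, hp₂a⟩ := hdense.exists_between hp₁a
  obtain ⟨q₁, hq₁D, hbq₁, hq₁1⟩ := hdense.exists_between hb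
  obtain ⟨q₂, hq₂D, hq₁q₂, hq₂1⟩ := hdense.exists_between hq₁1
  have hpq : p₁ ≤ q₂ := by linarith
  have hsub : Icc p₁ q₂ ⊆ Ioo 0 1 := Icc_subset_Ioo hp₁0 hq₂1
  have hconvS : GreenConvexOn (Icc p₁ q₂ ∩ D) u f := fun r₀ h₀ r₁ h₁ hr t ht hS =>
    hconv r₀ ⟨hsub h₀.1, h₀.2⟩ r₁ ⟨hsub h₁.1, h₁.2⟩ hr t ht hS.2
  have hfi : IntervalIntegrable f volume p₁ q₂ := (intervalIntegrable_iff_integrableOn_Icc_of_le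
    hpq).mpr (hf.integrableOn_compact_subset hsub isCompact_Icc)
  have hslope := hconvS.slope_le_slope_add_of_subset_Icc inter_subset_left hfi
  set K := ∫ z in p₁..q₂, |f z|
  have hK : 0 ≤ K := intervalIntegral.integral_nonneg hpq fun _ _ => abs_nonneg _
  refine ⟨|slope u p₁ p₂| + |slope u q₁ q₂| + 2 * K, by positivity,
    abs_sub_le_mul_abs_sub_of_abs_slope_le fun x hx y hy hxy => ?_⟩
  obtain ⟨⟨hax, hxb⟩, hxD⟩ := hx
  obtain ⟨⟨hay, hyb⟩, hyD⟩ := hy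
  refine abs_slope_le_of_slope_le_slope_add hslope ?_ ?_ ?_ ?_ ?_ ?_ hp₁p₂ (by linarith) hxy
    (by linarith) hq₁q₂ <;> exact ⟨⟨by linarith, by linarith⟩, ‹_›⟩
end

section
/- Let 𝔇 ⊂ ℝ be a ℚ-vector subspace with 𝔇 ≠ {0}, let κ ∈ ℝ, and let u : [0,1] ∩ 𝔇 → ℝ be locally bounded and satisfy u((1-t)r₀+tr₁) ≥ σ_κ^{(1-t)}(r₁-r₀) u(r₀) + σ_κ^{(t)}(r₁-r₀) u(r₁) for all r₀, r₁ ∈ [0,1] ∩ 𝔇 with κ(r₁-r₀)² < π² and t ∈ [0,1] with (1-t)r₀+tr₁ ∈ 𝔇. Then u is locally Lipschitz in (0,1): for every r ∈ (0,1) ∩ 𝔇 there exist ε, C > 0 with [r-ε, r+ε] ⊂ [0,1] and |u(x)-u(y)| ≤ C|x-y| for all x, y ∈ [r-ε, r+ε] ∩ 𝔇. -/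
/-!
For `|κδ²| ≤ 1` the coefficient `t ↦ σ_κ^{(t)}(δ)` is `2`-Lipschitz on `[0,1]` (it is
`f(ωt)/f(ω)` with `f = sin` or `sinh` and `ω ≤ 1`), so `|σ^{(t)}| ≤ 2t` and
`|1 - σ^{(t)}| ≤ 2(1 - t)`. Since `D` contains some `r ≠ 0`, it is dense, so around `r` we find
anchors `w < r - 2ε` and `z > r + 2ε` in `D`. For `x ≤ y` near `r`, the inequality on `[x, z]`
at `y` bounds `u x - u y`, and the one on `[w, y]` at `x` bounds `u y - u x`, each by
`4M(y - x)/ε`, where `M` bounds `|u|` near `r`.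
-/

open MeasureTheory Set

/-- The distortion coefficients `σ_κ^{(t)}(δ)` (finite cases, `κδ² < π²`). -/
noncomputable def sigmaDist (κ t δ : ℝ) : ℝ :=
  if κ * δ ^ 2 = 0 then t
  else if 0 < κ * δ ^ 2 then
    Real.sin (Real.sqrt (κ * δ ^ 2) * t) / Real.sin (Real.sqrt (κ * δ ^ 2))
  else
    Real.sinh (Real.sqrt (-(κ * δ ^ 2)) * t) / Real.sinh (Real.sqrt (-(κ * δ ^ 2)))

open Real
open scoped NNReal

lemma one_lt_pi_sq : 1 < π ^ 2 := by nlinarith [pi_gt_three]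

lemma cosh_le_two {x : ℝ} (hx : |x| ≤ 1) : cosh x ≤ 2 :=
  calc cosh x ≤ cosh 1 := cosh_le_cosh.2 (by simpa using hx)
    _ = (exp 1 + exp (-1)) / 2 := cosh_eq 1
    _ ≤ 2 := by linarith [exp_one_lt_d9, exp_lt_one_iff.2 (neg_one_lt_zero (R := ℝ))]

lemma lipschitzOnWith_sinh_Icc : LipschitzOnWith 2 sinh (Icc (-1) 1) :=
  (convex_Icc _ _).lipschitzOnWith_of_nnnorm_deriv_le (fun x _ => differentiable_sinh x)
    fun x hx => by
      rw [Real.deriv_sinh, ← NNReal.coe_le_coe, coe_nnnorm, norm_of_nonneg (cosh_pos x).le]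
      exact cosh_le_two (abs_le.2 hx)

lemma LipschitzOnWith.abs_div_sub_div_le {f : ℝ → ℝ} {L : ℝ≥0} {ω : ℝ}
    (hf : LipschitzOnWith L f (Icc 0 ω)) (hω : 0 ≤ ω) (hfω : L * ω ≤ 2 * f ω)
    {s s' : ℝ} (hs : s ∈ Icc (0 : ℝ) 1) (hs' : s' ∈ Icc (0 : ℝ) 1) :
    |f (ω * s) / f ω - f (ω * s') / f ω| ≤ 2 * |s - s'| := by
  have mem : ∀ {s : ℝ}, s ∈ Icc (0 : ℝ) 1 → ω * s ∈ Icc 0 ω := fun hs =>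
    ⟨mul_nonneg hω hs.1, mul_le_of_le_one_right hω hs.2⟩
  rcases (show 0 ≤ f ω by nlinarith [L.2]).eq_or_lt with h0 | hpos
  · simp [← h0]
  rw [← sub_div, abs_div, abs_of_pos hpos, div_le_iff₀ hpos]
  calc |f (ω * s) - f (ω * s')| ≤ L * |ω * s - ω * s'| := hf.dist_le_mul _ (mem hs) _ (mem hs')
    _ = L * ω * |s - s'| := by rw [← mul_sub, abs_mul, abs_of_nonneg hω, mul_assoc]
    _ ≤ 2 * f ω * |s - s'| := by gcongr
    _ = 2 * |s - s'| * f ω := by ring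

lemma abs_sigmaDist_sub_le {κ δ s s' : ℝ} (hκδ : |κ * δ ^ 2| ≤ 1) (hs : s ∈ Icc (0 : ℝ) 1)
    (hs' : s' ∈ Icc (0 : ℝ) 1) :
    |sigmaDist κ s δ - sigmaDist κ s' δ| ≤ 2 * |s - s'| := by
  obtain ⟨hlo, hhi⟩ := abs_le.1 hκδ
  unfold sigmaDist
  split_ifs with h0 hpos
  · linarith [abs_nonneg (s - s')]
  · have hω0 : 0 < √(κ * δ ^ 2) := sqrt_pos.2 hpos
    have hω1 : √(κ * δ ^ 2) ≤ 1 := sqrt_le_one.2 hhi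
    refine lipschitzWith_sin.lipschitzOnWith.abs_div_sub_div_le hω0.le ?_ hs hs'
    push_cast
    nlinarith [sin_gt_sub_cube hω0, pow_le_one₀ hω0.le hω1 (n := 2)]
  · have hω0 : 0 ≤ √(-(κ * δ ^ 2)) := sqrt_nonneg _
    have hω1 : √(-(κ * δ ^ 2)) ≤ 1 := sqrt_le_one.2 (by linarith)
    refine (lipschitzOnWith_sinh_Icc.mono (Icc_subset_Icc (by norm_num) hω1)).abs_div_sub_div_le
      hω0 ?_ hs hs'
    push_cast
    linarith [self_le_sinh_iff.2 hω0]

lemma sigmaDist_zero (κ δ : ℝ) : sigmaDist κ 0 δ = 0 := by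
  simp [sigmaDist]

lemma sigmaDist_one {κ δ : ℝ} (h : κ * δ ^ 2 < π ^ 2) : sigmaDist κ 1 δ = 1 := by
  unfold sigmaDist
  split_ifs with h0 hpos
  · rfl
  · rw [mul_one, div_self]
    exact (sin_pos_of_pos_of_lt_pi (sqrt_pos.2 hpos) ((sqrt_lt' pi_pos).2 h)).ne'
  · rw [mul_one, div_self]
    exact (sinh_pos_iff.2 (sqrt_pos.2 (neg_pos.2 ((not_lt.1 hpos).lt_of_ne h0)))).ne'

lemma abs_sigmaDist_le {κ δ t : ℝ} (hκδ : |κ * δ ^ 2| ≤ 1) (ht : t ∈ Icc (0 : ℝ) 1) :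
    |sigmaDist κ t δ| ≤ 2 * t := by
  simpa [sigmaDist_zero, abs_of_nonneg ht.1] using
    abs_sigmaDist_sub_le hκδ ht (left_mem_Icc.2 zero_le_one)

lemma abs_one_sub_sigmaDist_le {κ δ t : ℝ} (hκδ : |κ * δ ^ 2| ≤ 1) (ht : t ∈ Icc (0 : ℝ) 1) :
    |1 - sigmaDist κ t δ| ≤ 2 * (1 - t) := by
  simpa [sigmaDist_one ((le_of_abs_le hκδ).trans_lt one_lt_pi_sq),
    abs_of_nonneg (sub_nonneg.2 ht.2)] using
    abs_sigmaDist_sub_le hκδ (right_mem_Icc.2 zero_le_one) ht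

lemma sub_le_of_sigmaDist_combination_le {κ δ t M a b c : ℝ} (hκδ : |κ * δ ^ 2| ≤ 1)
    (ht : t ∈ Icc (0 : ℝ) 1) (ha : |a| ≤ M) (hb : |b| ≤ M)
    (h : sigmaDist κ (1 - t) δ * a + sigmaDist κ t δ * b ≤ c) :
    a - c ≤ 4 * M * t := by
  have h1 : |1 - sigmaDist κ (1 - t) δ| ≤ 2 * t := by
    simpa using abs_one_sub_sigmaDist_le hκδ (t := 1 - t) ⟨sub_nonneg.2 ht.2, by linarith [ht.1]⟩
  have h2 := abs_sigmaDist_le hκδ ht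
  have ht0 : 0 ≤ 2 * t := by linarith [ht.1]
  calc a - c ≤ (1 - sigmaDist κ (1 - t) δ) * a + -(sigmaDist κ t δ * b) := by linarith
    _ ≤ |1 - sigmaDist κ (1 - t) δ| * |a| + |sigmaDist κ t δ| * |b| := by
        rw [← abs_mul, ← abs_mul]
        exact add_le_add (le_abs_self _) (neg_le.1 (neg_abs_le _))
    _ ≤ 2 * t * M + 2 * t * M :=
        add_le_add (mul_le_mul h1 ha (abs_nonneg _) ht0) (mul_le_mul h2 hb (abs_nonneg _) ht0)
    _ = 4 * M * t := by ring

lemma sub_le_of_sigmaDist_chord {κ ε M p m q up um uq : ℝ} (hε : 0 < ε) (hpq : ε ≤ q - p)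
    (hm : m ∈ Icc p q) (hκ : |κ * (q - p) ^ 2| ≤ 1) (hup : |up| ≤ M) (huq : |uq| ≤ M)
    (h : sigmaDist κ (1 - (m - p) / (q - p)) (q - p) * up
      + sigmaDist κ ((m - p) / (q - p)) (q - p) * uq ≤ um) :
    up - um ≤ 4 * M / ε * (m - p) ∧ uq - um ≤ 4 * M / ε * (q - m) := by
  have hqp : 0 < q - p := hε.trans_le hpq
  have hM : 0 ≤ M := (abs_nonneg _).trans hup
  have h1t : 1 - (m - p) / (q - p) = (q - m) / (q - p) := by field_simp; ring
  set t := (m - p) / (q - p)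
  have ht : t ∈ Icc (0 : ℝ) 1 :=
    ⟨div_nonneg (sub_nonneg.2 hm.1) hqp.le, div_le_one_of_le₀ (by linarith [hm.2]) hqp.le⟩
  constructor
  · calc up - um ≤ 4 * M * t := sub_le_of_sigmaDist_combination_le hκ ht hup huq h
      _ ≤ 4 * M * ((m - p) / ε) := by
          gcongr
          exact div_le_div_of_nonneg_left (sub_nonneg.2 hm.1) hε hpq
      _ = _ := by ring
  · have h' : sigmaDist κ (1 - (1 - t)) (q - p) * uq + sigmaDist κ (1 - t) (q - p) * up ≤ um := by
      rw [sub_sub_cancel]; linarith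
    calc uq - um ≤ 4 * M * (1 - t) :=
          sub_le_of_sigmaDist_combination_le hκ ⟨by linarith [ht.2], by linarith [ht.1]⟩ huq hup h'
      _ ≤ 4 * M * ((q - m) / ε) := by
          rw [h1t]
          gcongr
          exact sub_nonneg.2 hm.2
      _ = _ := by ring

def DistortedConcaveOn (κ : ℝ) (D : Set ℝ) (u : ℝ → ℝ) : Prop :=
  ∀ r₀ ∈ Icc (0:ℝ) 1 ∩ D, ∀ r₁ ∈ Icc (0:ℝ) 1 ∩ D, κ * (r₁ - r₀) ^ 2 < π ^ 2 →
    ∀ t ∈ Icc (0:ℝ) 1, (1 - t) * r₀ + t * r₁ ∈ D →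
      sigmaDist κ (1 - t) (r₁ - r₀) * u r₀ + sigmaDist κ t (r₁ - r₀) * u r₁ ≤
        u ((1 - t) * r₀ + t * r₁)

namespace DistortedConcaveOn

variable {κ : ℝ} {D : Set ℝ} {u : ℝ → ℝ}

lemma sigmaDist_combination_le (hu : DistortedConcaveOn κ D u) {p m q : ℝ}
    (hp : p ∈ Icc (0 : ℝ) 1 ∩ D) (hq : q ∈ Icc (0 : ℝ) 1 ∩ D) (hmD : m ∈ D)
    (hm : m ∈ Icc p q) (hpq : p < q) (hκ : κ * (q - p) ^ 2 < π ^ 2) :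
    sigmaDist κ (1 - (m - p) / (q - p)) (q - p) * u p
      + sigmaDist κ ((m - p) / (q - p)) (q - p) * u q ≤ u m := by
  have hqp : 0 < q - p := sub_pos.2 hpq
  have hcomb : (1 - (m - p) / (q - p)) * p + (m - p) / (q - p) * q = m := by field_simp; ring
  have ht : (m - p) / (q - p) ∈ Icc (0 : ℝ) 1 :=
    ⟨div_nonneg (sub_nonneg.2 hm.1) hqp.le, div_le_one_of_le₀ (by linarith [hm.2]) hqp.le⟩
  simpa only [hcomb] using hu p hp q hq hκ _ ht (by rwa [hcomb])

lemma abs_sub_le_of_anchors (hu : DistortedConcaveOn κ D u) {M ε w z x y : ℝ} (hε : 0 < ε)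
    (hwz : Icc w z ⊆ Icc 0 1) (hwD : w ∈ D) (hzD : z ∈ D) (hκ : |κ| * (z - w) ^ 2 ≤ 1)
    (hM : ∀ v ∈ Icc w z ∩ D, |u v| ≤ M)
    (hx : x ∈ Icc (w + ε) (z - ε) ∩ D) (hy : y ∈ Icc (w + ε) (z - ε) ∩ D) :
    |u x - u y| ≤ 4 * M / ε * |x - y| := by
  wlog hxy : x ≤ y generalizing x y
  · rw [abs_sub_comm, abs_sub_comm x]
    exact this hy hx (le_of_not_ge hxy)
  have chord : ∀ p ∈ Icc w z ∩ D, ∀ q ∈ Icc w z ∩ D, ∀ m ∈ D, m ∈ Icc p q → ε ≤ q - p →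
      u p - u m ≤ 4 * M / ε * (m - p) ∧ u q - u m ≤ 4 * M / ε * (q - m) := by
    intro p hp q hq m hmD hm hpq
    have hκpq : |κ * (q - p) ^ 2| ≤ 1 := by
      rw [abs_mul, abs_of_nonneg (sq_nonneg (q - p))]
      refine le_trans (mul_le_mul_of_nonneg_left ?_ (abs_nonneg κ)) hκ
      exact pow_le_pow_left₀ (by linarith) (by linarith [hp.1.1, hq.1.2]) 2
    exact sub_le_of_sigmaDist_chord hε hpq hm hκpq (hM p hp) (hM q hq)
      (hu.sigmaDist_combination_le ⟨hwz hp.1, hp.2⟩ ⟨hwz hq.1, hq.2⟩ hmD hm (by linarith)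
        ((le_of_abs_le hκpq).trans_lt one_lt_pi_sq))
  obtain ⟨⟨hx₁, hx₂⟩, hxD⟩ := hx
  obtain ⟨⟨hy₁, hy₂⟩, hyD⟩ := hy
  rw [abs_sub_comm x, abs_of_nonneg (sub_nonneg.2 hxy), abs_sub_le_iff]
  exact ⟨(chord x ⟨⟨by linarith, by linarith⟩, hxD⟩ z ⟨⟨by linarith, le_rfl⟩, hzD⟩ y hyD
      ⟨hxy, by linarith⟩ (by linarith)).1,
    (chord w ⟨⟨le_rfl, by linarith⟩, hwD⟩ y ⟨⟨by linarith, by linarith⟩, hyD⟩ x hxD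
      ⟨by linarith, hxy⟩ (by linarith)).2⟩

end DistortedConcaveOn

lemma Submodule.dense_of_mem_ne_zero (D : Submodule ℚ ℝ) {a : ℝ} (ha : a ∈ D) (ha0 : a ≠ 0) :
    Dense (D : Set ℝ) :=
  Dense.mono (range_subset_iff.2 fun q => by simpa [Rat.smul_def] using D.smul_mem q ha)
    ((mul_right_surjective₀ ha0).denseRange.comp Rat.denseRange_cast (continuous_mul_const a))

theorem stmt4_general (D : Submodule ℚ ℝ) (κ : ℝ) (u : ℝ → ℝ)
    (hlocbdd : ∀ r ∈ Icc (0:ℝ) 1, ∃ ε > (0:ℝ), ∃ M : ℝ,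
      ∀ x ∈ Icc (r - ε) (r + ε) ∩ Icc (0:ℝ) 1 ∩ (D : Set ℝ), |u x| ≤ M)
    (hconc : ∀ r₀ ∈ Icc (0:ℝ) 1 ∩ (D : Set ℝ), ∀ r₁ ∈ Icc (0:ℝ) 1 ∩ (D : Set ℝ),
      κ * (r₁ - r₀) ^ 2 < Real.pi ^ 2 →
      ∀ t ∈ Icc (0:ℝ) 1, (1 - t) * r₀ + t * r₁ ∈ (D : Set ℝ) →
        sigmaDist κ (1 - t) (r₁ - r₀) * u r₀ + sigmaDist κ t (r₁ - r₀) * u r₁ ≤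
          u ((1 - t) * r₀ + t * r₁)) :
    ∀ r ∈ Ioo (0:ℝ) 1 ∩ (D : Set ℝ), ∃ ε > (0:ℝ), ∃ C > (0:ℝ),
      Icc (r - ε) (r + ε) ⊆ Icc (0:ℝ) 1 ∧
      ∀ x ∈ Icc (r - ε) (r + ε) ∩ (D : Set ℝ), ∀ y ∈ Icc (r - ε) (r + ε) ∩ (D : Set ℝ),
        |u x - u y| ≤ C * |x - y| := by
  rintro r ⟨hr, hrD⟩
  obtain ⟨ε₀, hε₀, M, hM⟩ := hlocbdd r (Ioo_subset_Icc_self hr)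
  have hρ : 0 < min ε₀ (min r (1 - r)) := lt_min hε₀ (lt_min hr.1 (sub_pos.2 hr.2))
  obtain ⟨ε, ⟨hερ, hεκ⟩, hε⟩ :
      ∃ ε, (3 * ε < min ε₀ (min r (1 - r)) ∧ |κ| * (6 * ε) ^ 2 < 1) ∧ 0 < ε :=
    -- both constraints hold at `ε = 0`, hence for all small `ε > 0` by continuity
    (((ContinuousAt.eventually_lt (x₀ := 0) (f := fun ε => 3 * ε) (by fun_prop)
      continuousAt_const (by simpa using hρ)).and
      (ContinuousAt.eventually_lt (x₀ := 0) (f := fun ε => |κ| * (6 * ε) ^ 2) (by fun_prop)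
      continuousAt_const (by simp))).filter_mono nhdsWithin_le_nhds |>.and
      (self_mem_nhdsWithin (s := Ioi 0))).exists
  simp only [lt_min_iff] at hερ
  have hdense := D.dense_of_mem_ne_zero hrD hr.1.ne'
  obtain ⟨w, hwD, hw₁, hw₂⟩ := hdense.exists_between (by linarith : r - 3 * ε < r - 2 * ε)
  obtain ⟨z, hzD, hz₁, hz₂⟩ := hdense.exists_between (by linarith : r + 2 * ε < r + 3 * ε)
  have hwz : Icc w z ⊆ Icc (r - ε₀) (r + ε₀) ∩ Icc 0 1 := fun v hv =>
    ⟨⟨by linarith [hv.1], by linarith [hv.2]⟩, ⟨by linarith [hv.1], by linarith [hv.2]⟩⟩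
  have hκ : |κ| * (z - w) ^ 2 ≤ 1 := le_trans (by gcongr <;> linarith) hεκ.le
  have hnear : Icc (r - ε) (r + ε) ⊆ Icc (w + ε) (z - ε) :=
    Icc_subset_Icc (by linarith) (by linarith)
  refine ⟨ε, hε, 4 * max M 1 / ε, by positivity,
    fun v hv => (hwz (Icc_subset_Icc (by linarith) (by linarith) hv)).2, fun x hx y hy => ?_⟩
  exact DistortedConcaveOn.abs_sub_le_of_anchors hconc hε (fun v hv => (hwz hv).2) hwD hzD hκ
    (fun v hv => (hM v ⟨hwz hv.1, hv.2⟩).trans (le_max_left M 1)) ⟨hnear hx.1, hx.2⟩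
    ⟨hnear hy.1, hy.2⟩

/-- Let `𝔇 ⊂ ℝ` be a nontrivial `ℚ`-vector subspace, `κ ∈ ℝ` and let
`u : [0,1] ∩ 𝔇 → ℝ` be locally bounded and satisfy the distorted concavity
inequality.  Then `u` is locally Lipschitz in `(0,1) ∩ 𝔇`. -/
theorem stmt4 (D : Submodule ℚ ℝ) (hD : D ≠ ⊥) (κ : ℝ) (u : ℝ → ℝ)
    (hlocbdd : ∀ r ∈ Icc (0:ℝ) 1, ∃ ε > (0:ℝ), ∃ M : ℝ,
      ∀ x ∈ Icc (r - ε) (r + ε) ∩ Icc (0:ℝ) 1 ∩ (D : Set ℝ), |u x| ≤ M)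
    (hconc : ∀ r₀ ∈ Icc (0:ℝ) 1 ∩ (D : Set ℝ), ∀ r₁ ∈ Icc (0:ℝ) 1 ∩ (D : Set ℝ),
      κ * (r₁ - r₀) ^ 2 < Real.pi ^ 2 →
      ∀ t ∈ Icc (0:ℝ) 1, (1 - t) * r₀ + t * r₁ ∈ (D : Set ℝ) →
        sigmaDist κ (1 - t) (r₁ - r₀) * u r₀ + sigmaDist κ t (r₁ - r₀) * u r₁ ≤
          u ((1 - t) * r₀ + t * r₁)) :
    ∀ r ∈ Ioo (0:ℝ) 1 ∩ (D : Set ℝ), ∃ ε > (0:ℝ), ∃ C > (0:ℝ),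
      Icc (r - ε) (r + ε) ⊆ Icc (0:ℝ) 1 ∧
      ∀ x ∈ Icc (r - ε) (r + ε) ∩ (D : Set ℝ), ∀ y ∈ Icc (r - ε) (r + ε) ∩ (D : Set ℝ),
        |u x - u y| ≤ C * |x - y| :=
  stmt4_general D κ u hlocbdd hconc
end

section
/- Let U : [0,∞) → ℝ be continuous and convex with U(0) = 0 and U' locally Lipschitz on (0,∞), and define P(r) := r U'(r) − U(r). Then U belongs to McCann's class DC(N) for N ∈ [1,∞] (i.e., P(0) = lim_{r↓0} P(r) = 0 and r P'(r) − P(r) ≥ −(1/N)P(r) for a.e. r > 0) if and only if the function V : (0,∞) → ℝ defined by V(r) := r^N U(r^{−N}) is convex and nonincreasing (for N < ∞). -/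
/-!
Put `G(s) = s^{1/N - 1} P(s)`. The chain rule gives `V'(r) = -N G(r^{-N})`, and `r ↦ r^{-N}` is a
decreasing bijection of `(0,∞)`, so `V` is convex iff `G` is nondecreasing; `V` is nonincreasing
because `P ≥ 0` by convexity of `U` and `U(0) = 0`. Since `P` is locally absolutely continuous,
`G` is nondecreasing iff `G' = s^{1/N - 2} (s P' + (1/N - 1) P) ≥ 0` a.e., which is the a.e.
inequality of `DC(N)`. The other two conditions hold for every such `U`: `P(0) = 0` trivially, and
`0 ≤ P(r) ≤ U(2r) - 2U(r) → 0`.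

`U` is differentiable on `(0,∞)` with derivative `deriv U`: being convex, it is locally absolutely
continuous, hence the integral of its a.e. derivative, which is continuous.
-/

open MeasureTheory Set Filter Topology

def LocallyAbsolutelyContinuousOn (f : ℝ → ℝ) (s : Set ℝ) : Prop :=
  ∀ a ∈ s, ∀ b ∈ s, AbsolutelyContinuousOnInterval f a b

section

variable {f g : ℝ → ℝ} {s : Set ℝ}

lemma LocallyLipschitzOn.locallyAbsolutelyContinuousOn (hs : s.OrdConnected)
    (hf : LocallyLipschitzOn s f) : LocallyAbsolutelyContinuousOn f s := fun _ ha _ hb ↦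
  ((hf.mono (hs.uIcc_subset ha hb)).exists_lipschitzOnWith_of_compact isCompact_uIcc).choose_spec
    |>.absolutelyContinuousOnInterval

lemma locallyAbsolutelyContinuousOn_rpow_const (c : ℝ) :
    LocallyAbsolutelyContinuousOn (fun x ↦ x ^ c) (Ioi 0) := fun _ ha _ hb ↦
  ContDiffOn.absolutelyContinuousOnInterval fun _ hx ↦
    (Real.contDiffAt_rpow_const_of_ne
      (ordConnected_Ioi.uIcc_subset ha hb hx).ne').contDiffWithinAt

namespace LocallyAbsolutelyContinuousOn

lemma mul (hf : LocallyAbsolutelyContinuousOn f s) (hg : LocallyAbsolutelyContinuousOn g s) :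
    LocallyAbsolutelyContinuousOn (fun x ↦ f x * g x) s :=
  fun a ha b hb ↦ (hf a ha b hb).fun_mul (hg a ha b hb)

lemma sub (hf : LocallyAbsolutelyContinuousOn f s) (hg : LocallyAbsolutelyContinuousOn g s) :
    LocallyAbsolutelyContinuousOn (fun x ↦ f x - g x) s :=
  fun a ha b hb ↦ (hf a ha b hb).fun_sub (hg a ha b hb)

lemma monotoneOn_of_ae_deriv_nonneg (hf : LocallyAbsolutelyContinuousOn f s)
    (hs : s.OrdConnected) (h : ∀ᵐ x ∂volume.restrict s, 0 ≤ deriv f x) : MonotoneOn f s := by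
  intro a ha b hb hab
  have hftc := (hf a ha b hb).integral_deriv_eq_sub
  have hint : 0 ≤ ∫ x in a..b, deriv f x :=
    intervalIntegral.integral_nonneg_of_ae_restrict hab
      (ae_restrict_of_ae_restrict_of_subset (hs.out ha hb) h)
  linarith

lemma ae_differentiableAt (hf : LocallyAbsolutelyContinuousOn f (Ioi 0)) :
    ∀ᵐ x ∂volume.restrict (Ioi 0), DifferentiableAt ℝ f x := by
  have hdiff : ∀ᵐ x, ∀ n : ℕ, x ∈ uIcc (n + 1 : ℝ)⁻¹ (n + 1) → DifferentiableAt ℝ f x :=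
    ae_all_iff.2 fun n ↦
      (hf _ (mem_Ioi.2 (by positivity)) _ (mem_Ioi.2 (by positivity))).ae_differentiableAt
  rw [ae_restrict_iff' measurableSet_Ioi]
  filter_upwards [hdiff] with x hx (hx0 : 0 < x)
  obtain ⟨m, hm⟩ := exists_nat_gt x
  obtain ⟨k, hk⟩ := exists_nat_gt x⁻¹
  refine hx (max m k) (Icc_subset_uIcc ⟨?_, ?_⟩)
  · rw [inv_le_comm₀ (by positivity) hx0]
    exact hk.le.trans (by exact_mod_cast (le_max_right m k).trans (Nat.le_succ _))
  · exact hm.le.trans (by exact_mod_cast (le_max_left m k).trans (Nat.le_succ _))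

end LocallyAbsolutelyContinuousOn

lemma locallyLipschitzOn_of_lipschitzOnWith_ball_inter
    (h : ∀ x ∈ s, ∃ ε > 0, ∃ K, LipschitzOnWith K f (Metric.ball x ε ∩ s)) :
    LocallyLipschitzOn s f := fun x hx ↦
  let ⟨_, hε, K, hK⟩ := h x hx
  ⟨K, _, inter_mem (mem_nhdsWithin_of_mem_nhds (Metric.ball_mem_nhds x hε)) self_mem_nhdsWithin, hK⟩

lemma LocallyLipschitzOn.hasDerivAt_of_continuousAt_deriv {x : ℝ} (hf : LocallyLipschitzOn s f)
    (hs : s ∈ 𝓝 x) (hcont : ContinuousAt (deriv f) x) : HasDerivAt f (deriv f x) x := by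
  obtain ⟨a, b, hx, hab, habs⟩ := exists_Icc_mem_subset_of_mem_nhds hs
  have hac : AbsolutelyContinuousOnInterval f a b := by
    obtain ⟨K, hK⟩ := (hf.mono habs).exists_lipschitzOnWith_of_compact isCompact_Icc
    rw [← uIcc_of_le (hx.1.trans hx.2)] at hK
    exact hK.absolutelyContinuousOnInterval
  have hftc : ∀ t ∈ Icc a b, f a + ∫ y in a..t, deriv f y = f t := fun t ht ↦ by
    rw [(hac.mono (uIcc_subset_uIcc_left (Icc_subset_uIcc ht))).integral_deriv_eq_sub]
    ring
  have hint : HasDerivAt (fun t ↦ f a + ∫ y in a..t, deriv f y) (deriv f x) x :=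
    (intervalIntegral.integral_hasDerivAt_right
      (hac.intervalIntegrable_deriv.mono_set (uIcc_subset_uIcc_left (Icc_subset_uIcc hx)))
      (stronglyMeasurable_deriv f).stronglyMeasurableAtFilter hcont).const_add _
  exact hint.congr_of_eventuallyEq (eventually_of_mem hab fun t ht ↦ (hftc t ht).symm)

end

section
variable {U : ℝ → ℝ} {s : Set ℝ} {r : ℝ}

lemma ConvexOn.hasDerivAt_of_locallyLipschitzOn_deriv (hs : IsOpen s) (hU : ConvexOn ℝ s U)
    (hU' : LocallyLipschitzOn s (deriv U)) (hr : r ∈ s) : HasDerivAt U (deriv U r) r :=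
  (hU.locallyLipschitzOn hs).hasDerivAt_of_continuousAt_deriv (hs.mem_nhds hr)
    (hU'.continuousOn.continuousAt (hs.mem_nhds hr))

lemma ConvexOn.locallyAbsolutelyContinuousOn_mul_deriv_sub (hs : IsOpen s) (hU : ConvexOn ℝ s U)
    (hU' : LocallyLipschitzOn s (deriv U)) :
    LocallyAbsolutelyContinuousOn (fun r ↦ r * deriv U r - U r) s :=
  ((LipschitzWith.id.locallyLipschitz.locallyLipschitzOn.locallyAbsolutelyContinuousOn
    hU.1.ordConnected).mul (hU'.locallyAbsolutelyContinuousOn hU.1.ordConnected)).sub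
    ((hU.locallyLipschitzOn hs).locallyAbsolutelyContinuousOn hU.1.ordConnected)

lemma ConvexOn.map_le_mul_deriv (hU : ConvexOn ℝ (Ici 0) U) (hU0 : U 0 = 0) (hr : 0 < r)
    (hd : DifferentiableAt ℝ U r) : U r ≤ r * deriv U r := by
  have h := hU.slope_le_deriv self_mem_Ici hr.le hr hd
  rwa [slope_def_field, hU0, sub_zero, sub_zero, div_le_iff₀ hr, mul_comm] at h

lemma ConvexOn.mul_deriv_le_sub (hU : ConvexOn ℝ (Ici 0) U) (hr : 0 < r)
    (hd : DifferentiableAt ℝ U r) : r * deriv U r ≤ U (2 * r) - U r := by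
  have h := hU.deriv_le_slope (y := 2 * r) (mem_Ici.2 hr.le) (mem_Ici.2 (by linarith))
    (by linarith) hd
  rwa [slope_def_field, show 2 * r - r = r by ring, le_div_iff₀ hr, mul_comm] at h

lemma ConvexOn.tendsto_mul_deriv_sub_nhdsGT_zero (hU : ConvexOn ℝ (Ici 0) U)
    (hcont : ContinuousWithinAt U (Ici 0) 0) (hU0 : U 0 = 0)
    (hd : ∀ r > 0, DifferentiableAt ℝ U r) :
    Tendsto (fun r ↦ r * deriv U r - U r) (𝓝[>] 0) (𝓝 0) := by
  have hU' : Tendsto U (𝓝[>] 0) (𝓝 0) := by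
    simpa [ContinuousWithinAt, hU0] using hcont.mono Ioi_subset_Ici_self
  have htwo : Tendsto (fun r : ℝ ↦ 2 * r) (𝓝[>] 0) (𝓝[>] 0) := by
    simpa using ((continuous_const_mul (2 : ℝ)).continuousWithinAt (s := Ioi 0) (x := 0))
      |>.tendsto_nhdsWithin (t := Ioi 0) fun r (hr : 0 < r) ↦ (by simpa using hr : (0 : ℝ) < 2 * r)
  have hbound : Tendsto (fun r ↦ U (2 * r) - 2 * U r) (𝓝[>] 0) (𝓝 0) := by
    simpa using (hU'.comp htwo).sub (hU'.const_mul 2)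
  refine squeeze_zero' ?_ ?_ hbound <;> filter_upwards [self_mem_nhdsWithin] with r (hr : 0 < r)
  · linarith [hU.map_le_mul_deriv hU0 hr (hd r hr)]
  · linarith [hU.mul_deriv_le_sub hr (hd r hr)]

end

lemma hasDerivAt_rpow_mul_comp_rpow_neg {U : ℝ → ℝ} {N r u' : ℝ} (hN : N ≠ 0) (hr : 0 < r)
    (hU : HasDerivAt U u' (r ^ (-N))) :
    HasDerivAt (fun r ↦ r ^ N * U (r ^ (-N)))
      (-N * ((r ^ (-N)) ^ (1 / N - 1) * (r ^ (-N) * u' - U (r ^ (-N))))) r := by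
  have h := (Real.hasDerivAt_rpow_const (p := N) (Or.inl hr.ne')).mul
    (hU.comp r (Real.hasDerivAt_rpow_const (Or.inl hr.ne')))
  have e1 : (r ^ (-N)) ^ (1 / N - 1) = r ^ (N - 1) := by
    rw [← Real.rpow_mul hr.le]; congr 1; field_simp; ring
  have e2 : r ^ N * r ^ (-N - 1) = r ^ (N - 1) * r ^ (-N) := by
    rw [← Real.rpow_add hr, ← Real.rpow_add hr]; ring_nf
  refine h.congr_deriv ?_
  rw [e1, Function.comp_apply]
  linear_combination (-N * u') * e2

lemma convexOn_Ioi_iff_monotoneOn_of_hasDerivAt {V G : ℝ → ℝ} {N : ℝ} (hN : 0 < N)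
    (hV : ∀ r > 0, HasDerivAt V (-N * G (r ^ (-N))) r) :
    ConvexOn ℝ (Ioi 0) V ↔ MonotoneOn G (Ioi 0) := by
  have hdiff (r : ℝ) (hr : r ∈ Ioi 0) : DifferentiableAt ℝ V r := (hV r hr).differentiableAt
  have hderiv (r : ℝ) (hr : r ∈ Ioi 0) : deriv V r = -N * G (r ^ (-N)) := (hV r hr).deriv
  constructor
  · intro hconv s₁ (hs₁ : 0 < s₁) s₂ (hs₂ : 0 < s₂) hs
    have hinv : ∀ {s : ℝ}, 0 < s → (s ^ (-N⁻¹)) ^ (-N) = s := fun hs ↦ by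
      rw [← Real.rpow_mul hs.le, neg_mul_neg, inv_mul_cancel₀ hN.ne', Real.rpow_one]
    have h := hconv.monotoneOn_deriv hdiff (Real.rpow_pos_of_pos hs₂ (-N⁻¹))
      (Real.rpow_pos_of_pos hs₁ (-N⁻¹))
      (Real.rpow_le_rpow_of_nonpos hs₁ hs (neg_nonpos.2 (inv_nonneg.2 hN.le)))
    rw [hderiv _ (Real.rpow_pos_of_pos hs₁ _), hderiv _ (Real.rpow_pos_of_pos hs₂ _), hinv hs₁,
      hinv hs₂] at h
    nlinarith
  · intro hmono
    refine MonotoneOn.convexOn_of_deriv (convex_Ioi 0)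
      (fun r hr ↦ (hdiff r hr).continuousAt.continuousWithinAt)
      (fun r hr ↦ (hdiff r (interior_subset hr)).differentiableWithinAt) ?_
    rw [interior_Ioi]
    intro r₁ (h₁ : 0 < r₁) r₂ (h₂ : 0 < r₂) h₁₂
    rw [hderiv r₁ h₁, hderiv r₂ h₂]
    have := hmono (Real.rpow_pos_of_pos h₂ (-N)) (Real.rpow_pos_of_pos h₁ (-N))
      (Real.rpow_le_rpow_of_nonpos h₁ h₁₂ (by linarith))
    nlinarith

lemma antitoneOn_Ioi_of_hasDerivAt {V G : ℝ → ℝ} {N : ℝ} (hN : 0 ≤ N)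
    (hV : ∀ r > 0, HasDerivAt V (-N * G (r ^ (-N))) r) (hG : ∀ s > 0, 0 ≤ G s) :
    AntitoneOn V (Ioi 0) :=
  antitoneOn_of_hasDerivWithinAt_nonpos (convex_Ioi 0)
    (fun r hr ↦ (hV r hr).continuousAt.continuousWithinAt)
    (fun r hr ↦ (hV r (interior_subset hr)).hasDerivWithinAt)
    fun r hr ↦ by
      rw [interior_Ioi] at hr
      nlinarith [hG _ (Real.rpow_pos_of_pos hr (-N))]

lemma monotoneOn_rpow_mul_iff_ae {P : ℝ → ℝ} (hP : LocallyAbsolutelyContinuousOn P (Ioi 0))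
    (c : ℝ) : MonotoneOn (fun r ↦ r ^ c * P r) (Ioi 0) ↔
      ∀ᵐ r ∂volume.restrict (Ioi 0), 0 ≤ r * deriv P r + c * P r := by
  have hderiv : ∀ r > 0, DifferentiableAt ℝ P r →
      HasDerivAt (fun r ↦ r ^ c * P r) (r ^ (c - 1) * (r * deriv P r + c * P r)) r := by
    intro r hr hd
    refine ((Real.hasDerivAt_rpow_const (Or.inl hr.ne')).mul hd.hasDerivAt).congr_deriv ?_
    rw [Real.rpow_sub_one hr.ne']
    field_simp
    ring
  constructor
  · intro hmono
    filter_upwards [hP.ae_differentiableAt, ae_restrict_mem measurableSet_Ioi]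
      with r hd (hr : 0 < r)
    have h := hmono.derivWithin_nonneg (x := r)
    rw [derivWithin_of_isOpen isOpen_Ioi hr, (hderiv r hr hd).deriv] at h
    exact (mul_nonneg_iff_of_pos_left (Real.rpow_pos_of_pos hr _)).1 h
  · intro h
    refine ((locallyAbsolutelyContinuousOn_rpow_const c).mul hP).monotoneOn_of_ae_deriv_nonneg
      ordConnected_Ioi ?_
    filter_upwards [hP.ae_differentiableAt, h, ae_restrict_mem measurableSet_Ioi]
      with r hd hr' (hr : 0 < r)
    rw [(hderiv r hr hd).deriv]
    exact mul_nonneg (Real.rpow_nonneg hr.le _) hr'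

/-- McCann's condition `DC(N)` (finite `N`): for a continuous convex entropy
`U : [0,∞) → ℝ` with `U(0) = 0` and locally Lipschitz derivative on `(0,∞)`,
with pressure `P(r) = rU'(r) - U(r)`, one has `P(0) = lim_{r↓0} P(r) = 0` and
`rP'(r) - P(r) ≥ -P(r)/N` for a.e. `r > 0` **iff** the function
`V(r) = r^N U(r^{-N})` is convex and nonincreasing on `(0,∞)`. -/
theorem stmt6 (N : ℝ) (hN : 1 ≤ N) (U : ℝ → ℝ) (P : ℝ → ℝ)
    (hUcont : ContinuousOn U (Ici 0)) (hUconv : ConvexOn ℝ (Ici 0) U)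
    (hU0 : U 0 = 0)
    (hU'lip : ∀ s ∈ Ioi (0:ℝ), ∃ ε > (0:ℝ), ∃ K : NNReal,
      LipschitzOnWith K (deriv U) (Metric.ball s ε ∩ Ioi 0))
    (hPdef : ∀ r, P r = r * deriv U r - U r) :
    (P 0 = 0 ∧ Tendsto P (nhdsWithin 0 (Ioi 0)) (nhds 0) ∧
      (∀ᵐ r ∂(volume.restrict (Ioi (0:ℝ))), -(P r) / N ≤ r * deriv P r - P r))
    ↔
    (ConvexOn ℝ (Ioi 0) (fun r : ℝ => r ^ N * U (r ^ (-N))) ∧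
      AntitoneOn (fun r : ℝ => r ^ N * U (r ^ (-N))) (Ioi 0)) := by
  have hN0 : 0 < N := by linarith
  have hP : P = fun r ↦ r * deriv U r - U r := funext hPdef
  have hUconv' : ConvexOn ℝ (Ioi 0) U := hUconv.subset Ioi_subset_Ici_self (convex_Ioi 0)
  have hU'loc := locallyLipschitzOn_of_lipschitzOnWith_ball_inter hU'lip
  have hUd (r : ℝ) (hr : 0 < r) : HasDerivAt U (deriv U r) r :=
    hUconv'.hasDerivAt_of_locallyLipschitzOn_deriv isOpen_Ioi hU'loc hr
  set G : ℝ → ℝ := fun s ↦ s ^ (1 / N - 1) * P s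
  have hV : ∀ r > 0, HasDerivAt (fun r ↦ r ^ N * U (r ^ (-N))) (-N * G (r ^ (-N))) r := by
    intro r hr
    simpa only [G, hPdef] using
      hasDerivAt_rpow_mul_comp_rpow_neg hN0.ne' hr (hUd _ (Real.rpow_pos_of_pos hr _))
  have hG : ∀ s > 0, 0 ≤ G s := fun s hs ↦ mul_nonneg (Real.rpow_nonneg hs.le _)
    (by rw [hPdef]; linarith [hUconv.map_le_mul_deriv hU0 hs (hUd s hs).differentiableAt])
  have hDC : (∀ᵐ r ∂(volume.restrict (Ioi (0:ℝ))), -(P r) / N ≤ r * deriv P r - P r) ↔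
      MonotoneOn G (Ioi 0) := by
    rw [monotoneOn_rpow_mul_iff_ae (hP ▸ hUconv'.locallyAbsolutelyContinuousOn_mul_deriv_sub
      isOpen_Ioi hU'loc)]
    refine eventually_congr (Eventually.of_forall fun r ↦ ?_)
    rw [show -(P r) / N = -(1 / N * P r) by ring]
    constructor <;> intro h <;> linarith
  have hPlim : Tendsto P (𝓝[>] 0) (𝓝 0) := hP ▸
    hUconv.tendsto_mul_deriv_sub_nhdsGT_zero (hUcont 0 self_mem_Ici) hU0
      fun r hr ↦ (hUd r hr).differentiableAt
  have hP0 : P 0 = 0 := by simp [hPdef, hU0]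
  rw [hDC, ← convexOn_Ioi_iff_monotoneOn_of_hasDerivAt hN0 hV]
  exact ⟨fun h ↦ ⟨h.2.2, antitoneOn_Ioi_of_hasDerivAt hN0.le hV hG⟩, fun h ↦ ⟨hP0, hPlim, h.1⟩⟩
end

section
/- Let Y be a Polish space with a nonnegative σ-finite Borel measure ν, let w_n ∈ L²(Y,ν) converge weakly in L²(Y,ν) to w, and let Z_n ∈ L^∞(Y,ν) be nonnegative and converge ν-a.e. to Z. Then liminf_n ∫_Y Z_n |w_n|² dν ≥ ∫_Y Z |w|² dν. -/
open MeasureTheory Filter Topology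
open scoped ENNReal

/-!
For a fixed bounded weight `ψ ≥ 0`, the pointwise inequality
`ψ w_n² ≥ 2 w_n (ψ w) - ψ w²` and weak convergence give `∫ ψ w² ≤ liminf ∫ ψ w_n²`.
The weights `ψ_m = min (inf_{n ≥ m} Z_n) m` are bounded, lie below `Z_n` for `n ≥ m`, and
increase to `Z` almost everywhere, so monotone convergence in `m` yields the claim.
-/

noncomputable def truncTailInf (u : ℕ → ℝ) (m : ℕ) : ℝ :=
  min (⨅ k, u (k + m)) m

section truncTailInf

variable {u : ℕ → ℝ}

lemma truncTailInf_le_natCast (m : ℕ) : truncTailInf u m ≤ m :=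
  min_le_right _ _

lemma truncTailInf_nonneg (hu : ∀ n, 0 ≤ u n) (m : ℕ) : 0 ≤ truncTailInf u m :=
  le_min (le_ciInf fun _ => hu _) m.cast_nonneg

lemma ciInf_tail_le (hu : BddBelow (Set.range u)) {m n : ℕ} (hmn : m ≤ n) :
    ⨅ k, u (k + m) ≤ u n := by
  have hbdd : BddBelow (Set.range fun k => u (k + m)) :=
    hu.mono (Set.range_comp_subset_range (· + m) u)
  simpa [Nat.sub_add_cancel hmn] using ciInf_le hbdd (n - m)

lemma truncTailInf_le (hu : BddBelow (Set.range u)) {m n : ℕ} (hmn : m ≤ n) :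
    truncTailInf u m ≤ u n :=
  (min_le_left _ _).trans (ciInf_tail_le hu hmn)

lemma monotone_truncTailInf (hu : BddBelow (Set.range u)) : Monotone (truncTailInf u) :=
  fun _ _ hmn => min_le_min (le_ciInf fun _ => ciInf_tail_le hu (by omega)) (Nat.cast_le.2 hmn)

lemma tendsto_truncTailInf {l : ℝ} (hu : Tendsto u atTop (𝓝 l)) :
    Tendsto (truncTailInf u) atTop (𝓝 l) := by
  refine tendsto_order.2 ⟨fun a ha => ?_, fun b hb => ?_⟩
  · obtain ⟨a', ha', ha'l⟩ := exists_between ha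
    obtain ⟨N, hN⟩ := eventually_atTop.1 ((tendsto_order.1 hu).1 a' ha'l)
    filter_upwards [eventually_ge_atTop N, tendsto_natCast_atTop_atTop.eventually_gt_atTop a]
      with m hm ham
    exact lt_min (ha'.trans_le (le_ciInf fun k => (hN _ (by omega)).le)) ham
  · filter_upwards [(tendsto_order.1 hu).2 b hb] with m hm
    exact (truncTailInf_le hu.bddBelow_range le_rfl).trans_lt hm

end truncTailInf

section WeakConvergence

variable {Y : Type*} [MeasurableSpace Y] {ν : Measure Y}

theorem lintegral_mul_sq_le_liminf_of_weak_tendsto {w : ℕ → Y → ℝ} {wlim ψ : Y → ℝ} {M : ℝ}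
    (hw : ∀ n, MemLp (w n) 2 ν) (hwlim : MemLp wlim 2 ν)
    (hweak : ∀ g : Y → ℝ, MemLp g 2 ν →
      Tendsto (fun n => ∫ y, w n y * g y ∂ν) atTop (𝓝 (∫ y, wlim y * g y ∂ν)))
    (hψ : Measurable ψ) (hψ0 : ∀ y, 0 ≤ ψ y) (hψM : ∀ y, ψ y ≤ M) :
    ∫⁻ y, ENNReal.ofReal (ψ y * wlim y ^ 2) ∂ν ≤
      liminf (fun n => ∫⁻ y, ENNReal.ofReal (ψ y * w n y ^ 2) ∂ν) atTop := by
  have hψ_norm : ∀ y, ‖ψ y‖ ≤ M := fun y => by rw [Real.norm_of_nonneg (hψ0 y)]; exact hψM y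
  have hint : ∀ f : Y → ℝ, MemLp f 2 ν → Integrable (fun y => ψ y * f y ^ 2) ν := fun f hf =>
    hf.integrable_sq.bdd_mul hψ.aestronglyMeasurable (ae_of_all _ hψ_norm)
  have hlint : ∀ f : Y → ℝ, MemLp f 2 ν →
      ∫⁻ y, ENNReal.ofReal (ψ y * f y ^ 2) ∂ν = ENNReal.ofReal (∫ y, ψ y * f y ^ 2 ∂ν) :=
    fun f hf => (ofReal_integral_eq_lintegral_ofReal (hint f hf)
      (ae_of_all _ fun y => mul_nonneg (hψ0 y) (sq_nonneg _))).symm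
  set g : Y → ℝ := fun y => ψ y * wlim y
  have hg : MemLp g 2 ν := hwlim.of_le_mul (hψ.aestronglyMeasurable.mul hwlim.1)
    (ae_of_all _ fun y => by
      rw [norm_mul]; exact mul_le_mul_of_nonneg_right (hψ_norm y) (norm_nonneg _))
  have hcross : ∀ n, Integrable (fun y => w n y * g y) ν := fun n => (hw n).integrable_mul hg
  have hlower : ∀ n, 2 * ∫ y, w n y * g y ∂ν - ∫ y, ψ y * wlim y ^ 2 ∂ν ≤
      ∫ y, ψ y * w n y ^ 2 ∂ν := fun n => by
    rw [← integral_const_mul, ← integral_sub ((hcross n).const_mul 2) (hint _ hwlim)]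
    refine integral_mono (((hcross n).const_mul 2).sub (hint _ hwlim)) (hint _ (hw n)) fun y => ?_
    nlinarith [mul_nonneg (hψ0 y) (sq_nonneg (w n y - wlim y))]
  have hlim : Tendsto (fun n => 2 * ∫ y, w n y * g y ∂ν - ∫ y, ψ y * wlim y ^ 2 ∂ν) atTop
      (𝓝 (∫ y, ψ y * wlim y ^ 2 ∂ν)) := by
    have hgg : ∫ y, wlim y * g y ∂ν = ∫ y, ψ y * wlim y ^ 2 ∂ν := by
      congr 1; ext y; ring
    convert ((hweak g hg).const_mul 2).sub_const (∫ y, ψ y * wlim y ^ 2 ∂ν) using 2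
    rw [hgg]; ring
  rw [hlint _ hwlim, ← (ENNReal.tendsto_ofReal hlim).liminf_eq]
  exact liminf_le_liminf
    (.of_forall fun n => (hlint _ (hw n)).symm ▸ ENNReal.ofReal_le_ofReal (hlower n))

end WeakConvergence

theorem stmt10_general {Y : Type*} [MeasurableSpace Y] (ν : Measure Y)
    (w : ℕ → Y → ℝ) (wlim : Y → ℝ) (Z : ℕ → Y → ℝ) (Zlim : Y → ℝ)
    (hw : ∀ n, MemLp (w n) 2 ν) (hwlim : MemLp wlim 2 ν)
    (hweak : ∀ g : Y → ℝ, MemLp g 2 ν →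
      Tendsto (fun n => ∫ y, w n y * g y ∂ν) atTop (nhds (∫ y, wlim y * g y ∂ν)))
    (hZmeas : ∀ n, Measurable (Z n))
    (hZpos : ∀ n y, 0 ≤ Z n y)
    (hZae : ∀ᵐ y ∂ν, Tendsto (fun n => Z n y) atTop (nhds (Zlim y))) :
    (∫⁻ y, ENNReal.ofReal (Zlim y * (wlim y) ^ 2) ∂ν) ≤
      liminf (fun n => ∫⁻ y, ENNReal.ofReal (Z n y * (w n y) ^ 2) ∂ν) atTop := by
  set ψ : ℕ → Y → ℝ := fun m y => truncTailInf (fun n => Z n y) m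
  have hbdd : ∀ y, BddBelow (Set.range fun n => Z n y) := fun y =>
    ⟨0, by rintro _ ⟨n, rfl⟩; exact hZpos n y⟩
  have hψ : ∀ m, Measurable (ψ m) := fun m =>
    (Measurable.iInf fun k => hZmeas (k + m)).min measurable_const
  have hψ_le : ∀ m, ∫⁻ y, ENNReal.ofReal (ψ m y * wlim y ^ 2) ∂ν ≤
      liminf (fun n => ∫⁻ y, ENNReal.ofReal (Z n y * (w n y) ^ 2) ∂ν) atTop := fun m =>
    (lintegral_mul_sq_le_liminf_of_weak_tendsto hw hwlim hweak (hψ m)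
      (fun y => truncTailInf_nonneg (hZpos · y) m) (fun _ => truncTailInf_le_natCast m)).trans <|
    liminf_le_liminf <| (eventually_ge_atTop m).mono fun n hn => lintegral_mono fun y =>
      ENNReal.ofReal_le_ofReal
        (mul_le_mul_of_nonneg_right (truncTailInf_le (hbdd y) hn) (sq_nonneg _))
  have hψ_tendsto : Tendsto (fun m => ∫⁻ y, ENNReal.ofReal (ψ m y * wlim y ^ 2) ∂ν) atTop
      (𝓝 (∫⁻ y, ENNReal.ofReal (Zlim y * wlim y ^ 2) ∂ν)) :=
    lintegral_tendsto_of_tendsto_of_monotone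
      (fun m => ((hψ m).aemeasurable.mul (hwlim.1.aemeasurable.pow_const 2)).ennreal_ofReal)
      (ae_of_all _ fun y _ _ hij => ENNReal.ofReal_le_ofReal
        (mul_le_mul_of_nonneg_right (monotone_truncTailInf (hbdd y) hij) (sq_nonneg _)))
      (hZae.mono fun y hy => ENNReal.tendsto_ofReal ((tendsto_truncTailInf hy).mul_const _))
  exact le_of_tendsto' hψ_tendsto hψ_le

/-- Joint lower semicontinuity: if `Y` is Polish with a σ-finite Borel measure
`ν`, `w_n ⇀ w` weakly in `L²(Y,ν)` and `Z_n ∈ L^∞(Y,ν)` are nonnegative with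
`Z_n → Z` ν-a.e., then `liminf_n ∫ Z_n |w_n|² dν ≥ ∫ Z |w|² dν`. -/
theorem stmt10 {Y : Type*} [TopologicalSpace Y] [PolishSpace Y]
    [MeasurableSpace Y] [BorelSpace Y]
    (ν : Measure Y) [SigmaFinite ν]
    (w : ℕ → Y → ℝ) (wlim : Y → ℝ) (Z : ℕ → Y → ℝ) (Zlim : Y → ℝ)
    (hw : ∀ n, MemLp (w n) 2 ν) (hwlim : MemLp wlim 2 ν)
    (hweak : ∀ g : Y → ℝ, MemLp g 2 ν →
      Tendsto (fun n => ∫ y, w n y * g y ∂ν) atTop (nhds (∫ y, wlim y * g y ∂ν)))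
    (hZmeas : ∀ n, Measurable (Z n))
    (hZpos : ∀ n y, 0 ≤ Z n y)
    (hZbd : ∀ n, ∃ C : ℝ, ∀ᵐ y ∂ν, Z n y ≤ C)
    (hZae : ∀ᵐ y ∂ν, Tendsto (fun n => Z n y) atTop (nhds (Zlim y))) :
    (∫⁻ y, ENNReal.ofReal (Zlim y * (wlim y) ^ 2) ∂ν) ≤
      liminf (fun n => ∫⁻ y, ENNReal.ofReal (Z n y * (w n y) ^ 2) ∂ν) atTop :=
  stmt10_general ν w wlim Z Zlim hw hwlim hweak hZmeas hZpos hZae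
end

section
/- Let H be a Hilbert space, V a dense subspace carrying a continuous nonnegative symmetric bilinear form E : V × V → ℝ, and define the dual quadratic form E*(ℓ,ℓ) on the dual V' by (1/2)E*(ℓ,ℓ) := sup_{f ∈ V} ⟨ℓ,f⟩ − (1/2)E(f,f). Then for ℓ with E*(ℓ,ℓ) < ∞, any maximizing sequence (f_n) for this supremum is Cauchy with respect to the seminorm induced by E, and its limit f in the completion satisfies (1/2)E*(ℓ,ℓ) = ⟨ℓ,f⟩ − (1/2)E(f,f) and E*(ℓ,ℓ) = E(f,f). -/
/-!
Write `J f = ℓ f - E(f,f)/2` (`DualForm.objective`) and `S = sup J = E*(ℓ,ℓ)/2`. The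
parallelogram law gives `J((f+g)/2) = (J f + J g)/2 + E(f-g,f-g)/8`, so
`E(f-g,f-g) ≤ 4((S - J f) + (S - J g))` and maximizing sequences are `E`-Cauchy. Bounding `J`
on the line `t ↦ t • f` by `S` gives, via the discriminant, `(ℓ f)² ≤ 2 S E(f,f)`; in terms of
the defect `d = S - J f` this reads `(E(f,f)/2 - S - d)² ≤ 4 S d`. Hence `d_n → 0` forces
`E(f_n,f_n) → 2S`, and then `ℓ f_n = J f_n + E(f_n,f_n)/2 → 2S`.
-/

open Filter

namespace DualForm

variable {V : Type*} [AddCommGroup V] [Module ℝ V]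

noncomputable def objective (ℓ : V →ₗ[ℝ] ℝ) (E : LinearMap.BilinForm ℝ V) (f : V) : ℝ :=
  ℓ f - 1 / 2 * E f f

variable (ℓ : V →ₗ[ℝ] ℝ) (E : LinearMap.BilinForm ℝ V)

lemma objective_midpoint (f g : V) :
    objective ℓ E ((1 / 2 : ℝ) • (f + g)) =
      (objective ℓ E f + objective ℓ E g) / 2 + E (f - g) (f - g) / 8 := by
  simp only [objective, map_smul, map_add, map_sub, LinearMap.smul_apply, LinearMap.add_apply,
    LinearMap.sub_apply, smul_eq_mul]
  ring

lemma objective_smul (t : ℝ) (f : V) :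
    objective ℓ E (t • f) = t * ℓ f - t ^ 2 / 2 * E f f := by
  simp only [objective, map_smul, LinearMap.smul_apply, smul_eq_mul]
  ring

variable {ℓ E} {S : ℝ}

lemma apply_sub_sub_le_of_objective_le (hS : ∀ h, objective ℓ E h ≤ S) (f g : V) :
    E (f - g) (f - g) ≤ 4 * ((S - objective ℓ E f) + (S - objective ℓ E g)) := by
  linarith [hS ((1 / 2 : ℝ) • (f + g)), objective_midpoint ℓ E f g]

lemma sq_le_of_objective_le (hS : ∀ h, objective ℓ E h ≤ S) (f : V) :
    ℓ f ^ 2 ≤ 2 * S * E f f := by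
  have := discrim_le_zero (a := E f f / 2) (b := -ℓ f) (c := S) fun t => by
    linarith [hS (t • f), objective_smul ℓ E t f]
  rw [discrim] at this
  linarith

lemma sq_half_apply_self_sub_le (hS : ∀ h, objective ℓ E h ≤ S) (f : V) :
    (E f f / 2 - S - (S - objective ℓ E f)) ^ 2 ≤ 4 * S * (S - objective ℓ E f) := by
  have := sq_le_of_objective_le hS f
  simp only [objective] at this ⊢
  linarith

variable {fn : ℕ → V}

lemma tendsto_defect_zero (hmax : Tendsto (fun n => objective ℓ E (fn n)) atTop (nhds S)) :
    Tendsto (fun n => S - objective ℓ E (fn n)) atTop (nhds 0) := by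
  simpa using (tendsto_const_nhds (x := S)).sub hmax

lemma apply_sub_sub_lt_of_tendsto (hS : ∀ h, objective ℓ E h ≤ S)
    (hmax : Tendsto (fun n => objective ℓ E (fn n)) atTop (nhds S)) {ε : ℝ} (hε : 0 < ε) :
    ∃ N : ℕ, ∀ m ≥ N, ∀ n ≥ N, E (fn n - fn m) (fn n - fn m) < ε := by
  obtain ⟨N, hN⟩ := eventually_atTop.mp
    ((tendsto_defect_zero hmax).eventually_lt_const (by positivity : 0 < ε / 8))
  exact ⟨N, fun m hm n hn => by
    linarith [apply_sub_sub_le_of_objective_le hS (fn n) (fn m), hN m hm, hN n hn]⟩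

lemma tendsto_apply_self (hS : ∀ h, objective ℓ E h ≤ S)
    (hmax : Tendsto (fun n => objective ℓ E (fn n)) atTop (nhds S)) :
    Tendsto (fun n => E (fn n) (fn n)) atTop (nhds (2 * S)) := by
  set d := fun n => S - objective ℓ E (fn n)
  have hd : Tendsto d atTop (nhds 0) := tendsto_defect_zero hmax
  have hgap : Tendsto (fun n => E (fn n) (fn n) / 2 - S - d n) atTop (nhds 0) := by
    refine squeeze_zero_norm (fun n => Real.abs_le_sqrt (sq_half_apply_self_sub_le hS (fn n))) ?_
    simpa using ((hd.const_mul (4 * S)).sqrt)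
  convert ((hgap.add hd).const_mul 2).add_const (2 * S) using 2 <;> ring

end DualForm

theorem stmt11_general {V : Type*} [AddCommGroup V] [Module ℝ V]
    (E : V →ₗ[ℝ] V →ₗ[ℝ] ℝ)
    (ℓ : V →ₗ[ℝ] ℝ) (Estar : ℝ)
    (hsup : IsLUB (Set.range fun f => ℓ f - (1/2) * E f f) ((1/2) * Estar))
    (fn : ℕ → V)
    (hmax : Tendsto (fun n => ℓ (fn n) - (1/2) * E (fn n) (fn n)) atTop
      (nhds ((1/2) * Estar))) :
    (∀ ε > (0:ℝ), ∃ N : ℕ, ∀ m ≥ N, ∀ n ≥ N,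
        E (fn n - fn m) (fn n - fn m) < ε) ∧
    Tendsto (fun n => E (fn n) (fn n)) atTop (nhds Estar) ∧
    Tendsto (fun n => ℓ (fn n)) atTop (nhds Estar) := by
  have hS : ∀ f, DualForm.objective ℓ E f ≤ 1 / 2 * Estar := fun f => hsup.1 ⟨f, rfl⟩
  have hE := DualForm.tendsto_apply_self hS hmax
  rw [show 2 * (1 / 2 * Estar) = Estar by ring] at hE
  refine ⟨fun ε hε => DualForm.apply_sub_sub_lt_of_tendsto hS hmax hε, hE, ?_⟩
  convert hmax.add (hE.const_mul (1 / 2)) using 2 <;> ring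

/-- Basic duality property of the dual quadratic form: if
`(1/2)E*(ℓ,ℓ) = sup_f ⟨ℓ,f⟩ - (1/2)E(f,f)` is finite, then every maximizing
sequence `(f_n)` is Cauchy for the seminorm induced by `E`, and (in the limit)
`(1/2)E*(ℓ,ℓ) = ⟨ℓ,f⟩ - (1/2)E(f,f)` and `E*(ℓ,ℓ) = E(f,f)`, i.e.
`E(f_n,f_n) → E*(ℓ,ℓ)` and `⟨ℓ,f_n⟩ → E*(ℓ,ℓ)`. -/
theorem stmt11 {V : Type*} [AddCommGroup V] [Module ℝ V]
    (E : V →ₗ[ℝ] V →ₗ[ℝ] ℝ) (hsym : ∀ f g, E f g = E g f) (hpos : ∀ f, 0 ≤ E f f)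
    (ℓ : V →ₗ[ℝ] ℝ) (Estar : ℝ)
    (hsup : IsLUB (Set.range fun f => ℓ f - (1/2) * E f f) ((1/2) * Estar))
    (fn : ℕ → V)
    (hmax : Tendsto (fun n => ℓ (fn n) - (1/2) * E (fn n) (fn n)) atTop
      (nhds ((1/2) * Estar))) :
    (∀ ε > (0:ℝ), ∃ N : ℕ, ∀ m ≥ N, ∀ n ≥ N,
        E (fn n - fn m) (fn n - fn m) < ε) ∧
    Tendsto (fun n => E (fn n) (fn n)) atTop (nhds Estar) ∧
    Tendsto (fun n => ℓ (fn n)) atTop (nhds Estar) :=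
  stmt11_general E ℓ Estar hsup fn hmax
end
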